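/- arXiv:1712.01342 — 2 statements merged into one kernel-verified Lean document; each statement's English description precedes it below -/
import Mathlib

section
/- Let 0<γ≤1, let y ∈ ℝⁿ and r>0, and let f be a locally integrable function on ℝⁿ vanishing on the ball B(y,2r). Then there is a dimensional constant C>0 (independent of f, y, r) such that for every x ∈ B(y,r), S_γ(f)(x) ≤ C Σ_{l=1}^∞ (1/|B(y,2^{l+1}r)|) ∫_{B(y,2^{l+1}r)∖B(y,2^l r)} |f(z)| dz. -/
open MeasureTheory Metric Set
open scoped ENNReal NNReal Real

noncomputable section

/-- Euclidean space `ℝⁿ`. -/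
abbrev En (n : ℕ) := EuclideanSpace ℝ (Fin n)

/-- The weighted measure `w(s) = ∫_s w` of a set. -/
def wMeas {n : ℕ} (w : En n → ℝ) (s : Set (En n)) : ℝ≥0∞ :=
  ∫⁻ x in s, ENNReal.ofReal (w x)

/-- A weight: a positive locally integrable function. -/
def IsWeight {n : ℕ} (w : En n → ℝ) : Prop :=
  LocallyIntegrable w volume ∧ ∀ x, 0 < w x

/-- Average of a weight over a ball (lower-integral version). -/
def ballAvg {n : ℕ} (w : En n → ℝ) (y : En n) (r : ℝ) : ℝ≥0∞ :=
  wMeas w (ball y r) / volume (ball y r)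

/-- The Muckenhoupt class `A_p`, `1 < p < ∞`. -/
def IsAp {n : ℕ} (w : En n → ℝ) (p : ℝ) : Prop :=
  IsWeight w ∧ ∃ C : ℝ, 0 < C ∧ ∀ (y : En n) (r : ℝ), 0 < r →
    (ballAvg w y r) ^ (1 / p) *
      (ballAvg (fun x => w x ^ (-(1 / (p - 1)))) y r) ^ (1 - 1 / p) ≤ ENNReal.ofReal C

/-- The Muckenhoupt class `A₁`. -/
def IsA1 {n : ℕ} (w : En n → ℝ) : Prop :=
  IsWeight w ∧ ∃ C : ℝ, 0 < C ∧ ∀ (y : En n) (r : ℝ), 0 < r →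
    ballAvg w y r ≤ ENNReal.ofReal C *
      ENNReal.ofReal (essInf w (volume.restrict (ball y r)))

/-- `A_∞ = ⋃_{1 ≤ p < ∞} A_p`. -/
def IsAinfty {n : ℕ} (w : En n → ℝ) : Prop :=
  IsA1 w ∨ ∃ p : ℝ, 1 < p ∧ IsAp w p

/-- The doubling class `Δ₂`: `μ(2B) ≤ C μ(B)` for all balls. -/
def IsDoubling {n : ℕ} (μ : En n → ℝ) : Prop :=
  IsWeight μ ∧ ∃ C : ℝ, 0 < C ∧ ∀ (y : En n) (r : ℝ), 0 < r →
    wMeas μ (ball y (2 * r)) ≤ ENNReal.ofReal C * wMeas μ (ball y r)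

/-- The family `C_γ` of kernels: supported in the unit ball, mean zero,
`γ`-Hölder with constant 1. -/
def Cfam (n : ℕ) (γ : ℝ) : Set (En n → ℝ) :=
  {φ | Function.support φ ⊆ closedBall 0 1 ∧ (∫ x, φ x) = 0 ∧
    ∀ x x' : En n, |φ x - φ x'| ≤ ‖x - x'‖ ^ γ}

/-- `L¹` dilation `φ_t(y) = t^{-n} φ(y/t)`. -/
def dil {n : ℕ} (φ : En n → ℝ) (t : ℝ) (y : En n) : ℝ :=
  t ^ (-(n : ℝ)) * φ (t⁻¹ • y)

/-- `A_γ(f)(y,t) = sup_{φ ∈ C_γ} |φ_t * f(y)|`. -/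
def Agamma {n : ℕ} (γ : ℝ) (f : En n → ℝ) (y : En n) (t : ℝ) : ℝ :=
  ⨆ φ ∈ Cfam n γ, |∫ z, dil φ t (y - z) * f z|

/-- Square integral of `F(y,t)` over the cone `Γ(x)`, against `dy dt / t^{n+1}`. -/
def coneInt {n : ℕ} (F : En n → ℝ → ℝ) (x : En n) : ℝ≥0∞ :=
  (∫⁻ p : En n × ℝ,
    Set.indicator {q : En n × ℝ | dist x q.1 < q.2}
      (fun q => ENNReal.ofReal (F q.1 q.2) ^ 2 / ENNReal.ofReal (q.2 ^ ((n : ℝ) + 1))) p)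
    ^ (1 / 2 : ℝ)

/-- The intrinsic square function `S_γ(f)`. -/
def Sgamma {n : ℕ} (γ : ℝ) (f : En n → ℝ) (x : En n) : ℝ≥0∞ :=
  coneInt (Agamma γ f) x

/-- `(Σ_j |S_γ(f_j)(x)|²)^{1/2}`. -/
def Sl2 {n : ℕ} (γ : ℝ) (f : ℕ → En n → ℝ) (x : En n) : ℝ≥0∞ :=
  (∑' j, Sgamma γ (f j) x ^ 2) ^ (1 / 2 : ℝ)

/-- `‖f⃗(x)‖_{ℓ²} = (Σ_j |f_j(x)|²)^{1/2}`. -/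
def l2 {n : ℕ} (f : ℕ → En n → ℝ) (x : En n) : ℝ≥0∞ :=
  (∑' j, ENNReal.ofReal |f j x| ^ 2) ^ (1 / 2 : ℝ)

/-- Weighted `L^p` norm of an `ℝ≥0∞`-valued function (`p` finite). -/
def wLp {n : ℕ} (w : En n → ℝ) (p : ℝ) (g : En n → ℝ≥0∞) : ℝ≥0∞ :=
  (∫⁻ x, g x ^ p * ENNReal.ofReal (w x)) ^ (1 / p)

/-- Weighted `L^p` norm restricted to a set. -/
def wLpOn {n : ℕ} (w : En n → ℝ) (p : ℝ) (s : Set (En n)) (g : En n → ℝ≥0∞) : ℝ≥0∞ :=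
  (∫⁻ x in s, g x ^ p * ENNReal.ofReal (w x)) ^ (1 / p)

/-- Weighted weak `L^p` quasi-norm. -/
def wWeakLp {n : ℕ} (w : En n → ℝ) (p : ℝ) (g : En n → ℝ≥0∞) : ℝ≥0∞ :=
  ⨆ (lam : ℝ) (_ : 0 < lam),
    ENNReal.ofReal lam * wMeas w {x | ENNReal.ofReal lam < g x} ^ (1 / p)

/-- Weighted weak `L^p` quasi-norm restricted to a set. -/
def wWeakLpOn {n : ℕ} (w : En n → ℝ) (p : ℝ) (s : Set (En n)) (g : En n → ℝ≥0∞) : ℝ≥0∞ :=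
  ⨆ (lam : ℝ) (_ : 0 < lam),
    ENNReal.ofReal lam * wMeas w {x | x ∈ s ∧ ENNReal.ofReal lam < g x} ^ (1 / p)

/-- `L^q` norm (with exponent `q ∈ (0,∞]`, usual modification at `∞`) of an
`ℝ≥0∞`-valued function with respect to a measure. -/
def lqNorm {n : ℕ} (ν : Measure (En n)) (q : ℝ≥0∞) (F : En n → ℝ≥0∞) : ℝ≥0∞ :=
  if q = ∞ then essSup F ν else (∫⁻ y, F y ^ q.toReal ∂ν) ^ (1 / q.toReal)

/-- The measure `μ(y) dy`. -/
def muDens {n : ℕ} (μ : En n → ℝ) : Measure (En n) :=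
  volume.withDensity fun y => ENNReal.ofReal (μ y)

/-- The weighted amalgam norm `‖·‖_{(L^p,L^q)^α(w;μ)}`. -/
def amalgamNorm {n : ℕ} (w μ : En n → ℝ) (p α : ℝ) (q : ℝ≥0∞) (g : En n → ℝ≥0∞) : ℝ≥0∞ :=
  ⨆ (r : ℝ) (_ : 0 < r),
    lqNorm (muDens μ) q fun y =>
      wMeas w (ball y r) ^ (1 / α - 1 / p - (q⁻¹).toReal) * wLpOn w p (ball y r) g

/-- The weighted weak amalgam norm `‖·‖_{(WL^p,L^q)^α(w;μ)}`. -/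
def amalgamWeakNorm {n : ℕ} (w μ : En n → ℝ) (p α : ℝ) (q : ℝ≥0∞) (g : En n → ℝ≥0∞) : ℝ≥0∞ :=
  ⨆ (r : ℝ) (_ : 0 < r),
    lqNorm (muDens μ) q fun y =>
      wMeas w (ball y r) ^ (1 / α - 1 / p - (q⁻¹).toReal) * wWeakLpOn w p (ball y r) g

/-- `sup_{φ ∈ C_γ} |∫ [b(x) - b(z)] φ_t(y-z) f(z) dz|`. -/
def AgammaComm {n : ℕ} (γ : ℝ) (b f : En n → ℝ) (x y : En n) (t : ℝ) : ℝ :=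
  ⨆ φ ∈ Cfam n γ, |∫ z, (b x - b z) * dil φ t (y - z) * f z|

/-- The commutator `[b, S_γ](f)`. -/
def commS {n : ℕ} (γ : ℝ) (b f : En n → ℝ) (x : En n) : ℝ≥0∞ :=
  coneInt (AgammaComm γ b f x) x

/-- `(Σ_j |[b,S_γ](f_j)(x)|²)^{1/2}`. -/
def commSl2 {n : ℕ} (γ : ℝ) (b : En n → ℝ) (f : ℕ → En n → ℝ) (x : En n) : ℝ≥0∞ :=
  (∑' j, commS γ b (f j) x ^ 2) ^ (1 / 2 : ℝ)

/-- Average of `b` over the ball `B(y,r)`. -/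
def ballAvgF {n : ℕ} (b : En n → ℝ) (y : En n) (r : ℝ) : ℝ :=
  ⨍ x in ball y r, b x

/-- `b ∈ BMO(ℝⁿ)` with `‖b‖_* ≤ M` (over balls). -/
def IsBMOwith {n : ℕ} (b : En n → ℝ) (M : ℝ) : Prop :=
  LocallyIntegrable b volume ∧
  ∀ (y : En n) (r : ℝ), 0 < r →
    (⨍ x in ball y r, |b x - ballAvgF b y r|) ≤ M

/-- The Young function `Φ(t) = t(1 + log⁺ t)` on `ℝ≥0∞`. -/
def PhiE (t : ℝ≥0∞) : ℝ≥0∞ :=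
  t * (1 + ENNReal.ofReal (max (Real.log t.toReal) 0))

/-- Weighted Luxemburg norm `‖g‖_{L log L(w), s}`. -/
def luxLlogL {n : ℕ} (w : En n → ℝ) (s : Set (En n)) (g : En n → ℝ≥0∞) : ℝ≥0∞ :=
  sInf {c : ℝ≥0∞ | 0 < c ∧ c ≠ ∞ ∧
    (∫⁻ x in s, PhiE (g x / c) * ENNReal.ofReal (w x)) ≤ wMeas w s}

/-- The weighted amalgam norm of `L log L` type, `‖·‖_{(L log L, L^q)^α(w;μ)}`. -/
def amalgamLlogL {n : ℕ} (w μ : En n → ℝ) (α : ℝ) (q : ℝ≥0∞) (g : En n → ℝ≥0∞) : ℝ≥0∞ :=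
  ⨆ (r : ℝ) (_ : 0 < r),
    lqNorm (muDens μ) q fun y =>
      wMeas w (ball y r) ^ (1 / α - (q⁻¹).toReal) * luxLlogL w (ball y r) g

/-- The centered Hardy–Littlewood maximal function. -/
def HLmax {n : ℕ} (w : En n → ℝ) (x : En n) : ℝ≥0∞ :=
  ⨆ (r : ℝ) (_ : 0 < r), ballAvg (fun z => |w z|) x r

/-- Axis-parallel cube with center `c` and side length `L`. -/
def cube {n : ℕ} (c : En n) (L : ℝ) : Set (En n) := {x | ∀ i, |x i - c i| ≤ L / 2}

/-- Average of `b` over the cube of center `c` and side `L`. -/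
def cubeAvgF {n : ℕ} (b : En n → ℝ) (c : En n) (L : ℝ) : ℝ :=
  ⨍ x in cube c L, b x

/-- `b ∈ BMO(ℝⁿ)` with `‖b‖_* ≤ M` (over cubes). -/
def IsBMOcubeWith {n : ℕ} (b : En n → ℝ) (M : ℝ) : Prop :=
  LocallyIntegrable b volume ∧
  ∀ (c : En n) (L : ℝ), 0 < L →
    (⨍ x in cube c L, |b x - cubeAvgF b c L|) ≤ M

/-- Weighted Luxemburg norm `‖g‖_{exp L(w), s}` for the Young function `e^t - 1`. -/
def luxExpL {n : ℕ} (w : En n → ℝ) (s : Set (En n)) (g : En n → ℝ) : ℝ≥0∞ :=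
  sInf ((fun σ : ℝ => ENNReal.ofReal σ) ''
    {σ : ℝ | 0 < σ ∧
      (∫⁻ x in s, ENNReal.ofReal (Real.exp (|g x| / σ) - 1) * ENNReal.ofReal (w x))
        ≤ wMeas w s})

/-- `sup_{φ ∈ C_γ} |φ_t * g(y)|` for a complex-valued `g`. -/
def AgammaC {n : ℕ} (γ : ℝ) (g : En n → ℂ) (y : En n) (t : ℝ) : ℝ :=
  ⨆ φ ∈ Cfam n γ, ‖∫ z, (dil φ t (y - z) : ℂ) * g z‖

/-- The intrinsic square function of a complex-valued function. -/
def SgammaC {n : ℕ} (γ : ℝ) (g : En n → ℂ) (x : En n) : ℝ≥0∞ :=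
  coneInt (AgammaC γ g) x

/-!
A kernel `φ ∈ C_γ` vanishes outside the unit ball and is `γ`-Hölder, so `|φ| ≤ 3 ^ γ` and
`|φ_t * f (y')| ≤ 3 ^ γ t⁻ⁿ ∫_{B(y',t)} |f|`. For `(y', t)` in the cone over `x ∈ B(y,r)` the ball
`B(y',t)` lies in `B(y, r + 2t)`; as `f` vanishes on `B(y,2r)`, only the dyadic annuli
`B(y,2^(l+2) r) \ B(y,2^(l+1) r)` with `2^l r < 2t` contribute. Hence `A_γ f (y', t)` is bounded by
a sum `∑ₗ ρₗ(t)` of functions of `t` alone, and the cone integral of such a majorant is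
`|B(0,1)| ∫₀^∞ (∑ₗ ρₗ)² dt/t`. Minkowski's inequality in `L²(dt/t)` and
`∫_a^∞ t^(-2n) dt/t = a^(-2n)/(2n)` for `a = 2^l r / 2` bound the `l`-th term by a multiple of
`a^(-n) ∫_{annulus} |f|`, and `a^(-n)` is a multiple of `|B(y, 8a)|⁻¹ = |B(y,2^(l+2) r)|⁻¹`.
-/

namespace ENNReal

variable {α : Type*} [MeasurableSpace α] {μ : Measure α}

theorem iSup_rpow_of_pos {ι : Sort*} {p : ℝ} (hp : 0 < p) (f : ι → ℝ≥0∞) :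
    (⨆ i, f i) ^ p = ⨆ i, f i ^ p :=
  (orderIsoRpow p hp).map_iSup f

theorem lintegral_Lp_finset_sum_le {ι : Type*} {p : ℝ} (hp : 1 ≤ p) {h : ι → α → ℝ≥0∞}
    (hm : ∀ l, AEMeasurable (h l) μ) (s : Finset ι) :
    (∫⁻ a, (∑ l ∈ s, h l a) ^ p ∂μ) ^ (1 / p) ≤ ∑ l ∈ s, (∫⁻ a, h l a ^ p ∂μ) ^ (1 / p) := by
  classical
  induction s using Finset.induction_on with
  | empty =>
    have hp0 : 0 < p := zero_lt_one.trans_le hp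
    simp [hp0]
  | insert k s hk ih =>
    simp only [Finset.sum_insert hk]
    exact (lintegral_Lp_add_le (hm k) (Finset.aemeasurable_fun_sum s fun l _ => hm l) hp).trans
      (add_le_add_right ih _)

theorem lintegral_Lp_tsum_le {p : ℝ} (hp : 1 ≤ p) {h : ℕ → α → ℝ≥0∞}
    (hm : ∀ l, AEMeasurable (h l) μ) :
    (∫⁻ a, (∑' l, h l a) ^ p ∂μ) ^ (1 / p) ≤ ∑' l, (∫⁻ a, h l a ^ p ∂μ) ^ (1 / p) := by
  have hp0 : 0 < p := zero_lt_one.trans_le hp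
  have hmono : ∀ a, Monotone fun L => (∑ l ∈ Finset.range L, h l a) ^ p := fun a L L' hL =>
    rpow_le_rpow (Finset.sum_le_sum_of_subset (Finset.range_subset_range.2 hL)) hp0.le
  calc (∫⁻ a, (∑' l, h l a) ^ p ∂μ) ^ (1 / p)
      = ⨆ L, (∫⁻ a, (∑ l ∈ Finset.range L, h l a) ^ p ∂μ) ^ (1 / p) := by
        simp_rw [ENNReal.tsum_eq_iSup_nat, iSup_rpow_of_pos hp0]
        rw [lintegral_iSup' (fun L => ?_) (ae_of_all μ hmono), iSup_rpow_of_pos (by positivity)]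
        exact (Finset.aemeasurable_fun_sum _ fun l _ => hm l).pow_const p
    _ ≤ ∑' l, (∫⁻ a, h l a ^ p ∂μ) ^ (1 / p) :=
        iSup_le fun L => (lintegral_Lp_finset_sum_le hp hm _).trans (ENNReal.sum_le_tsum _)

end ENNReal

theorem lintegral_Ioi_tsum_sq_div_rpow_le {ρ : ℕ → ℝ → ℝ≥0∞} (hρ : ∀ l, Measurable (ρ l)) :
    (∫⁻ t in Ioi 0, (∑' l, ρ l t) ^ 2 / ENNReal.ofReal t) ^ (1 / 2 : ℝ) ≤
      ∑' l, (∫⁻ t in Ioi 0, ρ l t ^ 2 / ENNReal.ofReal t) ^ (1 / 2 : ℝ) := by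
  set ν := (volume.restrict (Ioi (0 : ℝ))).withDensity fun t => (ENNReal.ofReal t)⁻¹
  have hν : ∀ g : ℝ → ℝ≥0∞, Measurable g →
      ∫⁻ t in Ioi 0, g t ^ 2 / ENNReal.ofReal t = ∫⁻ t, g t ^ (2 : ℝ) ∂ν := fun g hg => by
    rw [lintegral_withDensity_eq_lintegral_mul _ (by fun_prop) (hg.pow_const (2 : ℝ))]
    simp_rw [Pi.mul_apply, ENNReal.rpow_two, div_eq_mul_inv, mul_comm]
  rw [hν _ (Measurable.tsum hρ)]
  simp_rw [hν _ (hρ _)]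
  exact ENNReal.lintegral_Lp_tsum_le one_le_two fun l => (hρ l).aemeasurable

theorem lintegral_Ioi_indicator_rpow_neg_sq_div {s a : ℝ} (hs : 0 < s) (ha : 0 < a) :
    ∫⁻ t in Ioi 0, (Ioi a).indicator (fun t => ENNReal.ofReal (t ^ (-s))) t ^ 2 /
        ENNReal.ofReal t = ENNReal.ofReal (a ^ (-(2 * s)) / (2 * s)) := by
  have hpt : ∀ t, (Ioi a).indicator (fun t => ENNReal.ofReal (t ^ (-s))) t ^ 2 /
      ENNReal.ofReal t = (Ioi a).indicator (fun t => ENNReal.ofReal (t ^ (-(2 * s) - 1))) t := by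
    intro t
    by_cases ht : t ∈ Ioi a
    · have ht0 : 0 < t := ha.trans ht
      rw [indicator_of_mem ht, indicator_of_mem ht, ← ENNReal.ofReal_pow (by positivity),
        ← ENNReal.ofReal_div_of_pos ht0, ← Real.rpow_natCast, ← Real.rpow_mul ht0.le,
        Real.rpow_sub_one ht0.ne']
      norm_num [mul_comm]
    · simp [indicator_of_notMem ht]
  have hlt : -(2 * s) - 1 < -1 := by linarith
  rw [lintegral_congr hpt, lintegral_indicator measurableSet_Ioi,
    Measure.restrict_restrict measurableSet_Ioi, inter_eq_left.2 (Ioi_subset_Ioi ha.le),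
    ← ofReal_integral_eq_lintegral_ofReal (integrableOn_Ioi_rpow_of_lt hlt ha)
      ((ae_restrict_mem measurableSet_Ioi).mono fun t ht => Real.rpow_nonneg (ha.trans ht).le _),
    integral_Ioi_rpow_of_lt hlt ha]
  congr 1
  rw [sub_add_cancel, neg_div_neg_eq]

theorem lintegral_Ioi_const_mul_indicator_sq_div_rpow {s a : ℝ} (hs : 0 < s) (ha : 0 < a)
    (I : ℝ≥0∞) :
    (∫⁻ t in Ioi 0, (I * (Ioi a).indicator (fun t => ENNReal.ofReal (t ^ (-s))) t) ^ 2 /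
        ENNReal.ofReal t) ^ (1 / 2 : ℝ) = ENNReal.ofReal (a ^ (-s) / √(2 * s)) * I := by
  have hm : Measurable fun t : ℝ =>
      (Ioi a).indicator (fun t => ENNReal.ofReal (t ^ (-s))) t ^ 2 / ENNReal.ofReal t :=
    ((Measurable.indicator (by fun_prop) measurableSet_Ioi).pow_const 2).div (by fun_prop)
  simp_rw [mul_pow, mul_div_assoc]
  have h2s : 0 ≤ a ^ (-(2 * s)) / (2 * s) := by positivity
  rw [lintegral_const_mul _ hm, lintegral_Ioi_indicator_rpow_neg_sq_div hs ha,
    ENNReal.mul_rpow_of_nonneg _ _ (by norm_num), one_div, ← ENNReal.rpow_two I,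
    ← ENNReal.rpow_mul, mul_inv_cancel₀ two_ne_zero, ENNReal.rpow_one,
    ENNReal.ofReal_rpow_of_nonneg h2s (by norm_num), mul_comm,
    Real.div_rpow (by positivity) (by positivity), ← Real.rpow_mul ha.le, Real.sqrt_eq_rpow,
    one_div]
  congr 4
  ring

theorem abs_le_three_rpow_of_support_subset_closedBall {E : Type*} [NormedAddCommGroup E]
    [NormedSpace ℝ E] [Nontrivial E] {φ : E → ℝ} {γ : ℝ}
    (hsupp : Function.support φ ⊆ closedBall 0 1) (hφ : ∀ x x', |φ x - φ x'| ≤ ‖x - x'‖ ^ γ)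
    (v : E) : |φ v| ≤ 3 ^ γ := by
  by_cases hv : φ v = 0
  · rw [hv, abs_zero]; positivity
  obtain ⟨e, he⟩ := exists_norm_eq E (zero_le_three (α := ℝ))
  have hve : φ (v + e) = 0 := by
    refine Function.notMem_support.1 fun hmem => ?_
    have h1 := mem_closedBall_zero_iff.1 (hsupp hmem)
    have h2 := mem_closedBall_zero_iff.1 (hsupp hv)
    have h3 : ‖e‖ ≤ ‖v + e‖ + ‖v‖ := by simpa using norm_sub_le (v + e) v
    linarith
  simpa [hve, he] using hφ v (v + e)

section MetricSpace

variable {X : Type*} [PseudoMetricSpace X]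

theorem exists_mem_dyadic_annulus {y z : X} {r : ℝ} (hr : 0 < r) (h : 2 * r ≤ dist z y) :
    ∃ l : ℕ, z ∈ ball y (2 ^ (l + 2) * r) \ ball y (2 ^ (l + 1) * r) := by
  obtain ⟨l, hlow, hhigh⟩ := exists_nat_pow_near ((one_le_div (by positivity)).2 h) one_lt_two
  rw [le_div_iff₀ (by positivity)] at hlow
  rw [div_lt_iff₀ (by positivity)] at hhigh
  exact ⟨l, mem_ball.2 (hhigh.trans_eq (by ring)),
    fun hz => (mem_ball.1 hz).not_ge ((le_of_eq (by ring)).trans hlow)⟩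

theorem lt_of_mem_closedBall_of_le_dist {x y y' z : X} {r t : ℝ} {l : ℕ} (hr : 0 < r)
    (hx : x ∈ ball y r) (hxy' : dist x y' < t) (hz : z ∈ closedBall y' t)
    (hzy : 2 ^ (l + 1) * r ≤ dist z y) : 2 ^ l * r / 2 < t := by
  have h1 : (1 : ℝ) ≤ 2 ^ l := one_le_pow₀ one_le_two
  rw [pow_succ] at hzy
  nlinarith [mem_closedBall.1 hz, mem_ball.1 hx, dist_triangle z y' x, dist_triangle z x y,
    dist_comm x y']

variable [MeasurableSpace X] [OpensMeasurableSpace X]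

theorem lintegral_closedBall_le_tsum_annulus (μ : Measure X) {g : X → ℝ≥0∞} {x y y' : X}
    {r t : ℝ} (hr : 0 < r) (hx : x ∈ ball y r) (hg : ∀ z ∈ ball y (2 * r), g z = 0)
    (hxy' : dist x y' < t) :
    ∫⁻ z in closedBall y' t, g z ∂μ ≤ ∑' l : ℕ, (Ioi (2 ^ l * r / 2)).indicator
      (fun _ => ∫⁻ z in ball y (2 ^ (l + 2) * r) \ ball y (2 ^ (l + 1) * r), g z ∂μ) t := by
  set A : ℕ → Set X := fun l => ball y (2 ^ (l + 2) * r) \ ball y (2 ^ (l + 1) * r)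
  have hcover : closedBall y' t ⊆ ball y (2 * r) ∪ ⋃ l, closedBall y' t ∩ A l := by
    intro z hz
    by_cases hzy : dist z y < 2 * r
    · exact Or.inl hzy
    obtain ⟨l, hl⟩ := exists_mem_dyadic_annulus hr (not_lt.1 hzy)
    exact Or.inr (mem_iUnion.2 ⟨l, hz, hl⟩)
  have hpiece : ∀ l, ∫⁻ z in closedBall y' t ∩ A l, g z ∂μ ≤
      (Ioi (2 ^ l * r / 2)).indicator (fun _ => ∫⁻ z in A l, g z ∂μ) t := by
    intro l
    by_cases hl : t ∈ Ioi (2 ^ l * r / 2)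
    · rw [indicator_of_mem hl]
      exact lintegral_mono_set inter_subset_right
    · rw [indicator_of_notMem hl]
      suffices closedBall y' t ∩ A l = ∅ by simp [this]
      exact eq_empty_of_forall_notMem fun z ⟨hz, _, hzA⟩ =>
        hl (lt_of_mem_closedBall_of_le_dist hr hx hxy' hz (not_lt.1 hzA))
  have hzero : ∫⁻ z in ball y (2 * r), g z ∂μ = 0 :=
    (setLIntegral_congr_fun measurableSet_ball hg).trans lintegral_zero
  calc ∫⁻ z in closedBall y' t, g z ∂μ
      ≤ ∫⁻ z in ball y (2 * r) ∪ ⋃ l, closedBall y' t ∩ A l, g z ∂μ := lintegral_mono_set hcover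
    _ ≤ ∫⁻ z in ball y (2 * r), g z ∂μ + ∫⁻ z in ⋃ l, closedBall y' t ∩ A l, g z ∂μ :=
        lintegral_union_le _ _ _
    _ ≤ ∑' l, ∫⁻ z in closedBall y' t ∩ A l, g z ∂μ := by
        rw [hzero, zero_add]; exact lintegral_iUnion_le _ _
    _ ≤ _ := ENNReal.tsum_le_tsum hpiece

theorem lintegral_indicator_cone (μ : Measure X) [SFinite μ] (ν : Measure ℝ) [SFinite ν] (x : X)
    {g : ℝ → ℝ≥0∞} (hg : Measurable g) :
    ∫⁻ q, {q : X × ℝ | dist x q.1 < q.2}.indicator (fun q => g q.2) q ∂μ.prod ν =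
      ∫⁻ t, μ (ball x t) * g t ∂ν := by
  have hcone : MeasurableSet {q : X × ℝ | dist x q.1 < q.2} :=
    measurableSet_lt ((continuous_const.dist continuous_id).measurable.comp measurable_fst)
      measurable_snd
  rw [lintegral_prod_symm' ({q : X × ℝ | dist x q.1 < q.2}.indicator fun q => g q.2)
    ((hg.comp measurable_snd).indicator hcone)]
  refine lintegral_congr fun t => ?_
  have hslice : ∀ y, {q : X × ℝ | dist x q.1 < q.2}.indicator (fun q => g q.2) (y, t) =
      (ball x t).indicator (fun _ => g t) y := fun y => by
    simp only [indicator, mem_ofPred_eq, mem_ball']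
  simp_rw [hslice, lintegral_indicator_const measurableSet_ball, mul_comm]

end MetricSpace

section EuclideanSpace

variable {n : ℕ}

theorem dil_eq_zero_of_lt_norm {φ : En n → ℝ} (hsupp : Function.support φ ⊆ closedBall 0 1)
    {t : ℝ} (ht : 0 < t) {u : En n} (hu : t < ‖u‖) : dil φ t u = 0 := by
  have : φ (t⁻¹ • u) = 0 := by
    refine Function.notMem_support.1 fun hmem => ?_
    have h := mem_closedBall_zero_iff.1 (hsupp hmem)
    rw [norm_smul, norm_inv, Real.norm_of_nonneg ht.le, inv_mul_le_iff₀ ht, mul_one] at h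
    linarith
  rw [dil, this, mul_zero]

theorem abs_dil_le {φ : En n → ℝ} {M : ℝ} (hM : ∀ v, |φ v| ≤ M) {t : ℝ} (ht : 0 < t) (u : En n) :
    |dil φ t u| ≤ M * t ^ (-(n : ℝ)) := by
  rw [dil, abs_mul, abs_of_pos (Real.rpow_pos_of_pos ht _), mul_comm]
  exact mul_le_mul_of_nonneg_right (hM _) (Real.rpow_nonneg ht.le _)

theorem enorm_integral_dil_mul_le {φ : En n → ℝ} {M : ℝ} (hM : ∀ v, |φ v| ≤ M)
    (hsupp : Function.support φ ⊆ closedBall 0 1) {t : ℝ} (ht : 0 < t) (f : En n → ℝ)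
    (y : En n) :
    ‖∫ z, dil φ t (y - z) * f z‖ₑ ≤
      ENNReal.ofReal (M * t ^ (-(n : ℝ))) * ∫⁻ z in closedBall y t, ‖f z‖ₑ := by
  have hpt : ∀ z, ‖dil φ t (y - z) * f z‖ₑ ≤
      (closedBall y t).indicator (fun z => ENNReal.ofReal (M * t ^ (-(n : ℝ))) * ‖f z‖ₑ) z := by
    intro z
    by_cases hz : z ∈ closedBall y t
    · rw [indicator_of_mem hz, enorm_mul, Real.enorm_eq_ofReal_abs (dil φ t _)]
      gcongr
      exact abs_dil_le hM ht _
    · rw [mem_closedBall, dist_comm, dist_eq_norm, not_le] at hz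
      simp [dil_eq_zero_of_lt_norm hsupp ht hz]
  calc ‖∫ z, dil φ t (y - z) * f z‖ₑ ≤ ∫⁻ z, ‖dil φ t (y - z) * f z‖ₑ :=
        enorm_integral_le_lintegral_enorm _
    _ ≤ ∫⁻ z in closedBall y t, ENNReal.ofReal (M * t ^ (-(n : ℝ))) * ‖f z‖ₑ := by
        rw [← lintegral_indicator measurableSet_closedBall]
        exact lintegral_mono hpt
    _ = _ := lintegral_const_mul' _ _ ENNReal.ofReal_ne_top

theorem ofReal_Agamma_le {γ : ℝ} {f : En n → ℝ} {y : En n} {t : ℝ} {B : ℝ≥0∞}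
    (h : ∀ φ ∈ Cfam n γ, ‖∫ z, dil φ t (y - z) * f z‖ₑ ≤ B) :
    ENNReal.ofReal (Agamma γ f y t) ≤ B := by
  rcases eq_or_ne B ∞ with rfl | hB
  · exact le_top
  refine ENNReal.ofReal_le_of_le_toReal (Real.iSup_le (fun φ => Real.iSup_le (fun hφ => ?_)
    ENNReal.toReal_nonneg) ENNReal.toReal_nonneg)
  simpa only [toReal_enorm, Real.norm_eq_abs] using ENNReal.toReal_mono hB (h φ hφ)

theorem ofReal_Agamma_le_lintegral_closedBall (hn : n ≠ 0) (γ : ℝ) (f : En n → ℝ) (y : En n)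
    {t : ℝ} (ht : 0 < t) :
    ENNReal.ofReal (Agamma γ f y t) ≤
      ENNReal.ofReal (3 ^ γ * t ^ (-(n : ℝ))) * ∫⁻ z in closedBall y t, ‖f z‖ₑ := by
  have : NeZero n := ⟨hn⟩
  exact ofReal_Agamma_le fun φ ⟨hsupp, _, hφ⟩ => enorm_integral_dil_mul_le
    (abs_le_three_rpow_of_support_subset_closedBall hsupp hφ) hsupp ht f y

theorem lintegral_indicator_cone_div (x : En n) {g : ℝ → ℝ≥0∞} (hg : Measurable g) :
    ∫⁻ q : En n × ℝ, {q | dist x q.1 < q.2}.indicator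
        (fun q => g q.2 / ENNReal.ofReal (q.2 ^ ((n : ℝ) + 1))) q =
      volume (ball (0 : En n) 1) * ∫⁻ t in Ioi 0, g t / ENNReal.ofReal t := by
  have hpt : ∀ t, volume (ball x t) * (g t / ENNReal.ofReal (t ^ ((n : ℝ) + 1))) =
      (Ioi 0).indicator (fun t => volume (ball (0 : En n) 1) * (g t / ENNReal.ofReal t)) t := by
    intro t
    rcases le_or_gt t 0 with ht | ht
    · rw [indicator_of_notMem (notMem_Ioi.2 ht), ball_eq_empty.2 ht, measure_empty, zero_mul]
    rw [indicator_of_mem (mem_Ioi.2 ht), Measure.addHaar_ball_of_pos _ _ ht,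
      finrank_euclideanSpace_fin, Real.rpow_add_one ht.ne', Real.rpow_natCast,
      ENNReal.ofReal_mul (by positivity), mul_comm (ENNReal.ofReal _), mul_assoc, ← mul_div_assoc,
      ENNReal.mul_div_mul_left _ _ (by simp [ht]) ENNReal.ofReal_ne_top]
  rw [Measure.volume_eq_prod, lintegral_indicator_cone (g := fun t => g t /
      ENNReal.ofReal (t ^ ((n : ℝ) + 1))) _ _ _ (hg.div (by fun_prop)),
    lintegral_congr hpt, lintegral_indicator measurableSet_Ioi]
  exact lintegral_const_mul _ (hg.div (by fun_prop))

theorem coneInt_le_tsum {F : En n → ℝ → ℝ} {x : En n} {ρ : ℕ → ℝ → ℝ≥0∞}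
    (hρ : ∀ l, Measurable (ρ l))
    (hF : ∀ y t, dist x y < t → ENNReal.ofReal (F y t) ≤ ∑' l, ρ l t) :
    coneInt F x ≤ volume (ball (0 : En n) 1) ^ (1 / 2 : ℝ) *
      ∑' l, (∫⁻ t in Ioi 0, ρ l t ^ 2 / ENNReal.ofReal t) ^ (1 / 2 : ℝ) := by
  have hpt : ∀ q : En n × ℝ, {q : En n × ℝ | dist x q.1 < q.2}.indicator
      (fun q => ENNReal.ofReal (F q.1 q.2) ^ 2 / ENNReal.ofReal (q.2 ^ ((n : ℝ) + 1))) q ≤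
      {q : En n × ℝ | dist x q.1 < q.2}.indicator
      (fun q => (∑' l, ρ l q.2) ^ 2 / ENNReal.ofReal (q.2 ^ ((n : ℝ) + 1))) q := fun q =>
    indicator_le_indicator' fun hq => by gcongr; exact hF q.1 q.2 hq
  calc coneInt F x
      ≤ (∫⁻ q : En n × ℝ, {q : En n × ℝ | dist x q.1 < q.2}.indicator
          (fun q => (∑' l, ρ l q.2) ^ 2 / ENNReal.ofReal (q.2 ^ ((n : ℝ) + 1))) q) ^
          (1 / 2 : ℝ) := by
        unfold coneInt; exact ENNReal.rpow_le_rpow (lintegral_mono hpt) (by norm_num)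
    _ = volume (ball (0 : En n) 1) ^ (1 / 2 : ℝ) *
          (∫⁻ t in Ioi 0, (∑' l, ρ l t) ^ 2 / ENNReal.ofReal t) ^ (1 / 2 : ℝ) := by
        rw [lintegral_indicator_cone_div (g := fun t => (∑' l, ρ l t) ^ 2) x
          ((Measurable.tsum hρ).pow_const 2), ENNReal.mul_rpow_of_nonneg _ _ (by norm_num)]
    _ ≤ _ := by gcongr; exact lintegral_Ioi_tsum_sq_div_rpow_le hρ

theorem ofReal_rpow_neg_eq_mul_inv_volume_ball (y : En n) {a : ℝ} (ha : 0 < a) :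
    ENNReal.ofReal (a ^ (-(n : ℝ))) =
      ENNReal.ofReal (8 ^ n) * volume (ball (0 : En n) 1) * (volume (ball y (8 * a)))⁻¹ := by
  have hc0 : volume (ball (0 : En n) 1) ≠ 0 := (measure_ball_pos _ _ one_pos).ne'
  have hct : volume (ball (0 : En n) 1) ≠ ∞ := measure_ball_lt_top.ne
  rw [Measure.addHaar_ball_of_pos _ y (by positivity : 0 < 8 * a), finrank_euclideanSpace_fin,
    ENNReal.mul_inv (Or.inr hct) (Or.inr hc0), ← ENNReal.ofReal_inv_of_pos (by positivity),
    mul_mul_mul_comm, ENNReal.mul_inv_cancel hc0 hct, mul_one, ← ENNReal.ofReal_mul (by positivity),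
    Real.rpow_neg ha.le, Real.rpow_natCast, mul_pow]
  congr 1
  field_simp

theorem ofReal_Agamma_le_tsum_annulus (hn : n ≠ 0) (γ : ℝ) {f : En n → ℝ} {x y y' : En n}
    {r t : ℝ} (hr : 0 < r) (hx : x ∈ ball y r) (hf : ∀ z ∈ ball y (2 * r), f z = 0)
    (hxy' : dist x y' < t) :
    ENNReal.ofReal (Agamma γ f y' t) ≤ ∑' l : ℕ, ENNReal.ofReal (3 ^ γ) *
      (∫⁻ z in ball y (2 ^ (l + 2) * r) \ ball y (2 ^ (l + 1) * r), ‖f z‖ₑ) *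
      (Ioi (2 ^ l * r / 2)).indicator (fun t => ENNReal.ofReal (t ^ (-(n : ℝ)))) t := by
  have ht : 0 < t := dist_nonneg.trans_lt hxy'
  refine (ofReal_Agamma_le_lintegral_closedBall hn γ f y' ht).trans ?_
  calc _ ≤ ENNReal.ofReal (3 ^ γ * t ^ (-(n : ℝ))) * ∑' l : ℕ, (Ioi (2 ^ l * r / 2)).indicator
          (fun _ => ∫⁻ z in ball y (2 ^ (l + 2) * r) \ ball y (2 ^ (l + 1) * r), ‖f z‖ₑ) t := by
        gcongr
        exact lintegral_closedBall_le_tsum_annulus volume hr hx (fun z hz => by simp [hf z hz])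
          hxy'
    _ = _ := by
        rw [← ENNReal.tsum_mul_left]
        congr 1; funext l
        by_cases hl : t ∈ Ioi (2 ^ l * r / 2)
        · simp only [indicator_of_mem hl, ENNReal.ofReal_mul (by positivity : (0 : ℝ) ≤ 3 ^ γ)]
          ring
        · simp only [indicator_of_notMem hl, mul_zero]

theorem Sgamma_le_tsum_annulus (hn : n ≠ 0) (γ : ℝ) {f : En n → ℝ} {y : En n} {r : ℝ}
    (hr : 0 < r) (hf : ∀ z ∈ ball y (2 * r), f z = 0) {x : En n} (hx : x ∈ ball y r) :
    Sgamma γ f x ≤ volume (ball (0 : En n) 1) ^ (3 / 2 : ℝ) *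
      ENNReal.ofReal (3 ^ γ * 8 ^ n / √(2 * n)) * ∑' l : ℕ, (volume (ball y (2 ^ (l + 2) * r)))⁻¹ *
        ∫⁻ z in ball y (2 ^ (l + 2) * r) \ ball y (2 ^ (l + 1) * r), ‖f z‖ₑ := by
  set c := volume (ball (0 : En n) 1)
  set I : ℕ → ℝ≥0∞ := fun l => ∫⁻ z in ball y (2 ^ (l + 2) * r) \ ball y (2 ^ (l + 1) * r), ‖f z‖ₑ
  set ρ : ℕ → ℝ → ℝ≥0∞ := fun l t => ENNReal.ofReal (3 ^ γ) * I l *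
    (Ioi (2 ^ l * r / 2)).indicator (fun t => ENNReal.ofReal (t ^ (-(n : ℝ)))) t
  have hρ : ∀ l, Measurable (ρ l) := fun l =>
    (Measurable.indicator (by fun_prop) measurableSet_Ioi).const_mul _
  have hterm : ∀ l, (∫⁻ t in Ioi 0, ρ l t ^ 2 / ENNReal.ofReal t) ^ (1 / 2 : ℝ) =
      c * ENNReal.ofReal (3 ^ γ * 8 ^ n / √(2 * n)) *
        ((volume (ball y (2 ^ (l + 2) * r)))⁻¹ * I l) := fun l => by
    have ha : (0 : ℝ) < 2 ^ l * r / 2 := by positivity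
    rw [lintegral_Ioi_const_mul_indicator_sq_div_rpow (by positivity) ha,
      ENNReal.ofReal_div_of_pos (by positivity), ofReal_rpow_neg_eq_mul_inv_volume_ball y ha,
      show 8 * (2 ^ l * r / 2) = 2 ^ (l + 2) * r by ring, ENNReal.ofReal_div_of_pos (by positivity),
      ENNReal.ofReal_mul (by positivity)]
    simp only [div_eq_mul_inv]
    ring
  have hc : c ^ (1 / 2 : ℝ) * c = c ^ (3 / 2 : ℝ) := by
    rw [show (3 / 2 : ℝ) = 1 / 2 + 1 by norm_num,
      ENNReal.rpow_add _ _ (measure_ball_pos _ _ one_pos).ne' measure_ball_lt_top.ne,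
      ENNReal.rpow_one]
  calc Sgamma γ f x
      ≤ c ^ (1 / 2 : ℝ) * ∑' l, (∫⁻ t in Ioi 0, ρ l t ^ 2 / ENNReal.ofReal t) ^ (1 / 2 : ℝ) :=
        coneInt_le_tsum hρ fun y' t hxy' => ofReal_Agamma_le_tsum_annulus hn γ hr hx hf hxy'
    _ = _ := by
        simp_rw [hterm, ENNReal.tsum_mul_left, ← mul_assoc, hc]
        rfl

theorem Sgamma_zero (γ : ℝ) (x : En n) : Sgamma γ (0 : En n → ℝ) x = 0 := by
  simp [Sgamma, coneInt, Agamma]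

end EuclideanSpace

theorem intrinsic_square_far_part_pointwise_general (n : ℕ) (γ : ℝ) :
    ∃ C : ℝ, 0 < C ∧ ∀ f : En n → ℝ, LocallyIntegrable f volume →
      ∀ (y : En n) (r : ℝ), 0 < r → (∀ z ∈ ball y (2 * r), f z = 0) →
      ∀ x ∈ ball y r,
        Sgamma γ f x ≤ ENNReal.ofReal C *
          ∑' l : ℕ, (volume (ball y ((2 : ℝ) ^ (l + 2) * r)))⁻¹ *
            ∫⁻ z in ball y ((2 : ℝ) ^ (l + 2) * r) \ ball y ((2 : ℝ) ^ (l + 1) * r),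
              ENNReal.ofReal |f z| := by
  rcases eq_or_ne n 0 with rfl | hn
  · refine ⟨1, one_pos, fun f _ y r hr hf x _ => ?_⟩
    have : f = 0 := funext fun z => hf z (by simp [Subsingleton.elim z y, hr])
    simp [this, Sgamma_zero]
  set K := volume (ball (0 : En n) 1) ^ (3 / 2 : ℝ) * ENNReal.ofReal (3 ^ γ * 8 ^ n / √(2 * n))
  have hK : K ≠ ∞ := ENNReal.mul_ne_top
    (ENNReal.rpow_ne_top_of_nonneg (by norm_num) measure_ball_lt_top.ne) ENNReal.ofReal_ne_top
  have hK0 : K ≠ 0 := mul_ne_zero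
    (ENNReal.rpow_pos (measure_ball_pos _ _ one_pos) measure_ball_lt_top.ne).ne'
    (ENNReal.ofReal_pos.2 (by positivity)).ne'
  refine ⟨K.toReal, ENNReal.toReal_pos hK0 hK, fun f _ y r hr hf x hx => ?_⟩
  simp_rw [ENNReal.ofReal_toReal hK, ← Real.enorm_eq_ofReal_abs]
  exact Sgamma_le_tsum_annulus hn γ hr hf hx

/-- pointwise bound for `S_γ(f)` on `B(y,r)` when `f` vanishes on
`B(y,2r)`. -/
theorem intrinsic_square_far_part_pointwise (n : ℕ) (γ : ℝ)
    (hγ0 : 0 < γ) (hγ1 : γ ≤ 1) :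
    ∃ C : ℝ, 0 < C ∧ ∀ f : En n → ℝ, LocallyIntegrable f volume →
      ∀ (y : En n) (r : ℝ), 0 < r → (∀ z ∈ ball y (2 * r), f z = 0) →
      ∀ x ∈ ball y r,
        Sgamma γ f x ≤ ENNReal.ofReal C *
          ∑' l : ℕ, (volume (ball y ((2 : ℝ) ^ (l + 2) * r)))⁻¹ *
            ∫⁻ z in ball y ((2 : ℝ) ^ (l + 2) * r) \ ball y ((2 : ℝ) ^ (l + 1) * r),
              ENNReal.ofReal |f z| :=
  intrinsic_square_far_part_pointwise_general n γ
end
end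

section
/- Let 0<γ≤1 and let h ∈ L¹(ℝⁿ) be supported in a cube Q centered at c with side length ℓ(Q) and satisfy ∫_{ℝⁿ} h = 0. Then for every φ ∈ C_γ, every t>0 and every point u ∈ ℝⁿ, |φ_t * h(u)| ≤ C · (ℓ(Q)^γ / t^{n+γ}) ∫_{Q ∩ {z : |z−u| ≤ t}} |h(z)| dz, with C depending only on n and γ. -/
open MeasureTheory Metric Set
open scoped ENNReal NNReal Real

noncomputable section

/-! Since `∫ h = 0`, `φ_t * h (u) = ∫ (φ_t (u - z) - φ_t (u - y)) h z dz` for every `y`.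
Take `y ∈ Q`: the centre if `Q ⊆ B(u, t)`, otherwise a point of `Q` outside `B(u, t)`,
where `φ_t (u - y) = 0`. Either way the integrand vanishes off `Q ∩ B(u, t)`, and there the
Hölder bound on `φ` gives
`|φ_t (u - z) - φ_t (u - y)| ≤ ‖z - y‖ ^ γ / t ^ (n + γ) ≤ (√n ℓ(Q)) ^ γ / t ^ (n + γ)`. -/

theorem continuous_of_abs_sub_le_norm_rpow {E : Type*} [SeminormedAddCommGroup E] {f : E → ℝ}
    {γ : ℝ} (hγ : 0 < γ) (hf : ∀ x x', |f x - f x'| ≤ ‖x - x'‖ ^ γ) : Continuous f := by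
  refine continuous_iff_continuousAt.2 fun x => tendsto_iff_norm_sub_tendsto_zero.2 ?_
  have hlim : Filter.Tendsto (fun x' => ‖x' - x‖ ^ γ) (nhds x) (nhds 0) := by
    have hcont : Continuous fun x' => ‖x' - x‖ ^ γ :=
      (continuous_id.sub continuous_const).norm.rpow_const fun _ => Or.inr hγ.le
    simpa [Real.zero_rpow hγ.ne'] using hcont.tendsto x
  exact squeeze_zero (fun _ => norm_nonneg _) (fun x' => hf x' x) hlim

theorem abs_integral_mul_le_of_integral_eq_zero {α : Type*} [MeasurableSpace α] {μ : Measure α}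
    {K h : α → ℝ} {S : Set α} {a D : ℝ} (hS : MeasurableSet S) (hK : AEStronglyMeasurable K μ)
    (hh : Integrable h μ) (hmean : ∫ z, h z ∂μ = 0) (hout : ∀ z ∉ S, (K z - a) * h z = 0)
    (hin : ∀ z ∈ S, |K z - a| ≤ D) :
    |∫ z, K z * h z ∂μ| ≤ D * ∫ z in S, |h z| ∂μ := by
  have hbound : ∀ z, ‖(K z - a) * h z‖ ≤ S.indicator (fun z => D * |h z|) z := by
    intro z
    by_cases hz : z ∈ S
    · rw [indicator_of_mem hz, norm_mul, Real.norm_eq_abs, Real.norm_eq_abs]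
      exact mul_le_mul_of_nonneg_right (hin z hz) (abs_nonneg _)
    · rw [indicator_of_notMem hz, hout z hz, norm_zero]
  have hint : Integrable (fun z => (K z - a) * h z) μ :=
    ((hh.abs.const_mul D).indicator hS).mono' ((hK.sub aestronglyMeasurable_const).mul hh.1)
      (ae_of_all _ hbound)
  have hshift : ∫ z, K z * h z ∂μ = ∫ z, (K z - a) * h z ∂μ := by
    have hsplit := integral_add hint (hh.const_mul a)
    rw [integral_const_mul, hmean, mul_zero, add_zero] at hsplit
    simpa only [sub_mul, sub_add_cancel] using hsplit
  calc |∫ z, K z * h z ∂μ| = ‖∫ z, (K z - a) * h z ∂μ‖ := by rw [hshift, Real.norm_eq_abs]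
    _ ≤ ∫ z, S.indicator (fun z => D * |h z|) z ∂μ :=
        norm_integral_le_of_norm_le ((hh.abs.const_mul D).indicator hS) (ae_of_all _ hbound)
    _ = D * ∫ z in S, |h z| ∂μ := by rw [integral_indicator hS, integral_const_mul]

theorem measurableSet_cube {n : ℕ} (c : En n) (L : ℝ) : MeasurableSet (cube c L) := by
  simp only [cube, ofPred_forall]
  exact MeasurableSet.iInter fun i => measurableSet_le (by fun_prop) measurable_const

theorem center_mem_cube {n : ℕ} (c : En n) {L : ℝ} (hL : 0 ≤ L) : c ∈ cube c L := by
  intro i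
  simpa using div_nonneg hL zero_le_two

theorem norm_sub_le_of_mem_cube {n : ℕ} {c y z : En n} {L : ℝ} (hL : 0 ≤ L)
    (hy : y ∈ cube c L) (hz : z ∈ cube c L) : ‖z - y‖ ≤ Real.sqrt n * L := by
  have hcoord : ∀ i, ‖(z - y) i‖ ^ 2 ≤ L ^ 2 := by
    intro i
    have hzy : |z i - y i| ≤ L := by
      calc |z i - y i| = |(z i - c i) - (y i - c i)| := by ring_nf
        _ ≤ |z i - c i| + |y i - c i| := abs_sub _ _
        _ ≤ L := by linarith [hy i, hz i]
    simpa [Real.norm_eq_abs, sq_abs] using pow_le_pow_left₀ (abs_nonneg _) hzy 2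
  rw [EuclideanSpace.norm_eq, ← Real.sqrt_sq hL, ← Real.sqrt_mul (Nat.cast_nonneg n)]
  gcongr
  simpa using Finset.sum_le_sum fun i (_ : i ∈ Finset.univ) => hcoord i

theorem dil_eq_zero {n : ℕ} {φ : En n → ℝ} (hφ : Function.support φ ⊆ closedBall 0 1) {t : ℝ}
    (ht : 0 < t) {y : En n} (hy : t < ‖y‖) : dil φ t y = 0 := by
  refine mul_eq_zero_of_right _ (Function.notMem_support.1 fun hmem => ?_)
  have hle := mem_closedBall_zero_iff.1 (hφ hmem)
  rw [norm_smul, Real.norm_eq_abs, abs_inv, abs_of_pos ht, inv_mul_le_iff₀ ht, mul_one] at hle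
  exact hle.not_gt hy

theorem abs_dil_sub_dil_le {n : ℕ} {φ : En n → ℝ} {γ : ℝ}
    (hφ : ∀ x x' : En n, |φ x - φ x'| ≤ ‖x - x'‖ ^ γ) {t : ℝ} (ht : 0 < t) (y y' : En n) :
    |dil φ t y - dil φ t y'| ≤ ‖y - y'‖ ^ γ / t ^ ((n : ℝ) + γ) := by
  have hscale : ‖t⁻¹ • y - t⁻¹ • y'‖ = ‖y - y'‖ / t := by
    rw [← smul_sub, norm_smul, Real.norm_eq_abs, abs_inv, abs_of_pos ht, inv_mul_eq_div]
  calc |dil φ t y - dil φ t y'| = t ^ (-(n : ℝ)) * |φ (t⁻¹ • y) - φ (t⁻¹ • y')| := by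
        rw [dil, dil, ← mul_sub, abs_mul, abs_of_pos (Real.rpow_pos_of_pos ht _)]
    _ ≤ t ^ (-(n : ℝ)) * (‖y - y'‖ / t) ^ γ := by
        rw [← hscale]; exact mul_le_mul_of_nonneg_left (hφ _ _) (by positivity)
    _ = ‖y - y'‖ ^ γ / t ^ ((n : ℝ) + γ) := by
        rw [Real.div_rpow (norm_nonneg _) ht.le, Real.rpow_add ht, Real.rpow_neg ht.le]
        field_simp

theorem exists_mem_cube_dil_sub_mul_eq_zero {n : ℕ} {φ h : En n → ℝ}
    (hφ : Function.support φ ⊆ closedBall 0 1) {t : ℝ} (ht : 0 < t) {c : En n} {L : ℝ}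
    (hL : 0 ≤ L) (hh : Function.support h ⊆ cube c L) (u : En n) :
    ∃ y ∈ cube c L, ∀ z ∉ cube c L ∩ closedBall u t,
      (dil φ t (u - z) - dil φ t (u - y)) * h z = 0 := by
  obtain ⟨y, hyQ, hy⟩ : ∃ y ∈ cube c L, cube c L ⊆ closedBall u t ∨ dil φ t (u - y) = 0 := by
    by_cases hQ : cube c L ⊆ closedBall u t
    · exact ⟨c, center_mem_cube c hL, Or.inl hQ⟩
    · obtain ⟨y, hyQ, hyB⟩ := not_subset.1 hQ
      rw [mem_closedBall, dist_comm, dist_eq_norm, not_le] at hyB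
      exact ⟨y, hyQ, Or.inr (dil_eq_zero hφ ht hyB)⟩
  refine ⟨y, hyQ, fun z hz => ?_⟩
  by_cases hzQ : z ∈ cube c L
  · have hzB : t < ‖u - z‖ := by
      simpa [mem_closedBall, dist_comm, dist_eq_norm, hzQ] using hz
    rcases hy with hQ | hy
    · exact absurd (hQ hzQ) (by simpa [mem_closedBall, dist_comm, dist_eq_norm] using hzB)
    · rw [dil_eq_zero hφ ht hzB, hy, sub_self, zero_mul]
  · rw [Function.notMem_support.1 fun hmem => hzQ (hh hmem), mul_zero]

theorem convolution_cancellation_estimate_general (n : ℕ) (γ : ℝ)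
    (hγ0 : 0 < γ) :
    ∃ C : ℝ, 0 < C ∧ ∀ (h : En n → ℝ) (c : En n) (L : ℝ), 0 < L →
      Integrable h volume → Function.support h ⊆ cube c L → (∫ z, h z) = 0 →
      ∀ φ ∈ Cfam n γ, ∀ t : ℝ, 0 < t → ∀ u : En n,
        |∫ z, dil φ t (u - z) * h z| ≤
          C * (L ^ γ / t ^ ((n : ℝ) + γ)) *
            ∫ z in cube c L ∩ closedBall u t, |h z| := by
  refine ⟨Real.sqrt n ^ γ + 1, by positivity, ?_⟩
  rintro h c L hL hh hsupp hmean φ ⟨hφsupp, -, hφ⟩ t ht u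
  obtain ⟨y, hyQ, hvanish⟩ := exists_mem_cube_dil_sub_mul_eq_zero hφsupp ht hL.le hsupp u
  have hK : Continuous fun z => dil φ t (u - z) :=
    continuous_const.mul ((continuous_of_abs_sub_le_norm_rpow hγ0 hφ).comp (by fun_prop))
  refine abs_integral_mul_le_of_integral_eq_zero
    ((measurableSet_cube c L).inter measurableSet_closedBall) hK.aestronglyMeasurable hh hmean
    hvanish (fun z hz => ?_)
  calc |dil φ t (u - z) - dil φ t (u - y)| ≤ ‖z - y‖ ^ γ / t ^ ((n : ℝ) + γ) := by
        simpa [norm_sub_rev z y] using abs_dil_sub_dil_le hφ ht (u - z) (u - y)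
    _ ≤ (Real.sqrt n * L) ^ γ / t ^ ((n : ℝ) + γ) := by
        gcongr; exact norm_sub_le_of_mem_cube hL.le hyQ hz.1
    _ ≤ (Real.sqrt n ^ γ + 1) * (L ^ γ / t ^ ((n : ℝ) + γ)) := by
        rw [Real.mul_rpow (Real.sqrt_nonneg _) hL.le, mul_div_assoc]
        gcongr
        linarith

/-- kernel estimate for `φ_t * h` with `h` supported in a cube
`Q` and of mean zero. -/
theorem convolution_cancellation_estimate (n : ℕ) (γ : ℝ)
    (hγ0 : 0 < γ) (hγ1 : γ ≤ 1) :
    ∃ C : ℝ, 0 < C ∧ ∀ (h : En n → ℝ) (c : En n) (L : ℝ), 0 < L →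
      Integrable h volume → Function.support h ⊆ cube c L → (∫ z, h z) = 0 →
      ∀ φ ∈ Cfam n γ, ∀ t : ℝ, 0 < t → ∀ u : En n,
        |∫ z, dil φ t (u - z) * h z| ≤
          C * (L ^ γ / t ^ ((n : ℝ) + γ)) *
            ∫ z in cube c L ∩ closedBall u t, |h z| :=
  convolution_cancellation_estimate_general n γ hγ0

end
end
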